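/- arXiv:2401.17034 — 4 statements merged into one kernel-verified Lean document; each statement's English description precedes it below -/
import Mathlib

section
/- Let I be a type and Λ : (I → ℝ) → (I → ℝ) monotone with respect to the pointwise order. Let m¹ : I → ℝ satisfy m¹ ≤ Λ m¹, and let (m̂ⁿ) be the fictitious play sequence with initial function m¹. Then for every n ≥ 1, m̂ⁿ ≤ Λ m̂ⁿ and m̂ⁿ ≤ m̂^{n+1} (pointwise). -/
theorem fictitious_play_nondecreasing {I : Type*}
    (Λ : (I → ℝ) → (I → ℝ)) (hΛ : Monotone Λ)
    (m1 : I → ℝ) (hm1 : m1 ≤ Λ m1)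
    (mhat : ℕ → I → ℝ) (h1 : mhat 1 = m1)
    (hrec : ∀ n : ℕ, 1 ≤ n → mhat (n + 1) =
      fun t => (n : ℝ) / (n + 1) * mhat n t + 1 / (n + 1) * Λ (mhat n) t) :
    ∀ n : ℕ, 1 ≤ n → mhat n ≤ Λ (mhat n) ∧ mhat n ≤ mhat (n + 1) := by
  have key : ∀ n : ℕ, 1 ≤ n → mhat n ≤ Λ (mhat n) →
      mhat n ≤ mhat (n + 1) ∧ mhat (n + 1) ≤ Λ (mhat n) := by
    intro n hn hfix
    have hpos : (0 : ℝ) < (n : ℝ) + 1 := by positivity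
    constructor <;> intro t <;> rw [hrec n hn] <;> dsimp only
    · have : mhat n t ≤ Λ (mhat n) t := hfix t
      have h : mhat n t = (n : ℝ) / (n + 1) * mhat n t + 1 / (n + 1) * mhat n t := by
        field_simp
      rw [h]
      gcongr <;> linarith
    · have : mhat n t ≤ Λ (mhat n) t := hfix t
      have h : Λ (mhat n) t = (n : ℝ) / (n + 1) * Λ (mhat n) t + 1 / (n + 1) * Λ (mhat n) t := by
        field_simp
      rw [h]
      gcongr <;> linarith
  intro n hn
  induction n, hn using Nat.le_induction with
  | base =>
    have hfix : mhat 1 ≤ Λ (mhat 1) := by rw [h1]; exact hm1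
    exact ⟨hfix, (key 1 le_rfl hfix).1⟩
  | succ n hn ih =>
    obtain ⟨hfix, hle⟩ := ih
    have h1' := key n hn hfix
    have hfix' : mhat (n + 1) ≤ Λ (mhat (n + 1)) := h1'.2.trans (hΛ h1'.1)
    exact ⟨hfix', (key (n + 1) (by omega) hfix').1⟩
end

section
/- Let I be a type and Λ : (I → ℝ) → (I → ℝ) monotone with respect to the pointwise order. Let m¹ : I → ℝ satisfy m¹ ≤ Λ m¹, let (m̂ⁿ) be the fictitious play sequence with initial function m¹, and let m : I → ℝ be a fixed point of Λ (Λ m = m) with m¹ ≤ m. Then m̂ⁿ ≤ m (pointwise) for every n ≥ 1. -/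
theorem fictitious_play_le_fixed_point {I : Type*}
    (Λ : (I → ℝ) → (I → ℝ)) (hΛ : Monotone Λ)
    (m1 : I → ℝ) (hm1 : m1 ≤ Λ m1)
    (mhat : ℕ → I → ℝ) (h1 : mhat 1 = m1)
    (hrec : ∀ n : ℕ, 1 ≤ n → mhat (n + 1) =
      fun t => (n : ℝ) / (n + 1) * mhat n t + 1 / (n + 1) * Λ (mhat n) t)
    (m : I → ℝ) (hm : Λ m = m) (h1m : m1 ≤ m) :
    ∀ n : ℕ, 1 ≤ n → mhat n ≤ m := by
  intro n hn
  induction n with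
  | zero => omega
  | succ k ih =>
    rcases Nat.eq_or_lt_of_le hn with h | h
    · rw [show k + 1 = 1 by omega, h1]; exact h1m
    · have hk : 1 ≤ k := by omega
      have hkm : mhat k ≤ m := ih hk
      have hΛk : Λ (mhat k) ≤ m := hm ▸ hΛ hkm
      rw [hrec k hk]
      intro t
      have hpos : (0:ℝ) < (k:ℝ) + 1 := by positivity
      have h1' : (k:ℝ) / (k+1) * mhat k t ≤ (k:ℝ) / (k+1) * m t :=
        mul_le_mul_of_nonneg_left (hkm t) (by positivity)
      have h2' : 1 / ((k:ℝ)+1) * Λ (mhat k) t ≤ 1 / ((k:ℝ)+1) * m t :=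
        mul_le_mul_of_nonneg_left (hΛk t) (by positivity)
      have : (k:ℝ) / (k+1) * m t + 1 / (k+1) * m t = m t := by
        field_simp
      calc (k:ℝ) / (k+1) * mhat k t + 1 / (k+1) * Λ (mhat k) t
          ≤ (k:ℝ) / (k+1) * m t + 1 / (k+1) * m t := add_le_add h1' h2'
        _ = m t := this
end

section
/- Let I be a type and Λ : (I → ℝ) → (I → ℝ) monotone with respect to the pointwise order, and sequentially continuous along monotone sequences: whenever (mₙ) is pointwise nondecreasing and converges pointwise to m, the sequence Λ(mₙ) converges pointwise to Λ(m). Let m¹ : I → ℝ satisfy m¹ ≤ Λ m¹, let (m̂ⁿ) be the fictitious play sequence with initial function m¹, and assume there exists M : I → ℝ with m̂ⁿ ≤ M for all n. Then (m̂ⁿ) converges pointwise to a function m* satisfying Λ m* = m*. -/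
open Filter Topology

theorem fictitious_play_converges_to_fixed_point {I : Type*}
    (Λ : (I → ℝ) → (I → ℝ)) (hΛ : Monotone Λ)
    (hcont : ∀ (ms : ℕ → I → ℝ) (m : I → ℝ),
      (∀ t, Monotone fun n => ms n t) →
      (∀ t, Tendsto (fun n => ms n t) atTop (𝓝 (m t))) →
      ∀ t, Tendsto (fun n => Λ (ms n) t) atTop (𝓝 (Λ m t)))
    (m1 : I → ℝ) (hm1 : m1 ≤ Λ m1)
    (mhat : ℕ → I → ℝ) (h1 : mhat 1 = m1)
    (hrec : ∀ n : ℕ, 1 ≤ n → mhat (n + 1) =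
      fun t => (n : ℝ) / (n + 1) * mhat n t + 1 / (n + 1) * Λ (mhat n) t)
    (M : I → ℝ) (hM : ∀ n : ℕ, mhat n ≤ M) :
    ∃ mstar : I → ℝ,
      (∀ t, Tendsto (fun n => mhat n t) atTop (𝓝 (mstar t))) ∧
        Λ mstar = mstar := by
  -- key invariant: for n ≥ 1, mhat n ≤ Λ (mhat n)
  have key : ∀ n : ℕ, 1 ≤ n → mhat n ≤ Λ (mhat n) := by
    intro n hn
    induction n, hn using Nat.le_induction with
    | base => rw [h1]; exact hm1
    | succ n hn ih =>
      have hp : (0:ℝ) < (n:ℝ) + 1 := by positivity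
      have hle : mhat n ≤ mhat (n + 1) := by
        intro t
        rw [hrec n hn]
        have h2 : (n:ℝ) / (n + 1) * mhat n t + 1 / (n + 1) * Λ (mhat n) t - mhat n t
            = (Λ (mhat n) t - mhat n t) / ((n:ℝ) + 1) := by
          field_simp; ring
        have h3 := div_nonneg (sub_nonneg.2 (ih t)) hp.le
        simp only []
        linarith [h2 ▸ h3]
      have hub : mhat (n + 1) ≤ Λ (mhat n) := by
        intro t
        rw [hrec n hn]
        have h2 : Λ (mhat n) t - ((n:ℝ) / (n + 1) * mhat n t + 1 / (n + 1) * Λ (mhat n) t)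
            = (n:ℝ) * (Λ (mhat n) t - mhat n t) / ((n:ℝ) + 1) := by
          field_simp; ring
        have h3 : (0:ℝ) ≤ (n:ℝ) * (Λ (mhat n) t - mhat n t) / ((n:ℝ) + 1) := by
          apply div_nonneg _ hp.le
          exact mul_nonneg (Nat.cast_nonneg n) (sub_nonneg.2 (ih t))
        simp only []
        linarith [h2 ▸ h3]
      exact le_trans hub (hΛ hle)
  -- monotonicity for n ≥ 1
  have mono : ∀ n : ℕ, 1 ≤ n → mhat n ≤ mhat (n + 1) := by
    intro n hn t
    have hp : (0:ℝ) < (n:ℝ) + 1 := by positivity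
    rw [hrec n hn]
    have h2 : (n:ℝ) / (n + 1) * mhat n t + 1 / (n + 1) * Λ (mhat n) t - mhat n t
        = (Λ (mhat n) t - mhat n t) / ((n:ℝ) + 1) := by
      field_simp; ring
    have h3 := div_nonneg (sub_nonneg.2 (key n hn t)) hp.le
    simp only []
    linarith [h2 ▸ h3]
  set ms : ℕ → I → ℝ := fun n => mhat (n + 1) with hms
  have hmono : ∀ t, Monotone fun n => ms n t := by
    intro t
    apply monotone_nat_of_le_succ
    intro n
    exact mono (n + 1) (by omega) t
  have hbdd : ∀ t, BddAbove (Set.range fun n => ms n t) := by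
    intro t
    exact ⟨M t, by rintro x ⟨n, rfl⟩; exact hM (n + 1) t⟩
  set mstar : I → ℝ := fun t => ⨆ n, ms n t with hmstar
  have htend : ∀ t, Tendsto (fun n => ms n t) atTop (𝓝 (mstar t)) := fun t =>
    tendsto_atTop_ciSup (hmono t) (hbdd t)
  have htendm : ∀ t, Tendsto (fun n => mhat n t) atTop (𝓝 (mstar t)) := fun t =>
    (tendsto_add_atTop_iff_nat 1).mp (htend t)
  have hΛtend : ∀ t, Tendsto (fun n => Λ (ms n) t) atTop (𝓝 (Λ mstar t)) :=
    hcont ms mstar hmono htend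
  refine ⟨mstar, htendm, ?_⟩
  funext t
  -- Cesàro argument
  set d : ℕ → ℝ := fun k => Nat.casesOn k (m1 t) (fun j => Λ (mhat (j + 1)) t) with hd
  have hdt : Tendsto d atTop (𝓝 (Λ mstar t)) := by
    apply (tendsto_add_atTop_iff_nat 1).mp
    exact hΛtend t
  have hces := hdt.cesaro.comp (tendsto_add_atTop_nat 1)
  have hid : ∀ n : ℕ, mhat (n + 1) t = (((n:ℝ) + 1)⁻¹) * ∑ k ∈ Finset.range (n + 1), d k := by
    intro n
    induction n with
    | zero => simp [hd, h1]
    | succ n ih =>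
      have hp : (0:ℝ) < (n:ℝ) + 1 := by positivity
      have hp2 : (0:ℝ) < (n:ℝ) + 2 := by positivity
      rw [hrec (n + 1) (by omega)]
      simp only [Finset.sum_range_succ (n := n + 1)]
      have hdval : d (n + 1) = Λ (mhat (n + 1)) t := rfl
      push_cast
      rw [hdval, ih]
      field_simp
  have hseq : Tendsto (fun n => mhat (n + 1) t) atTop (𝓝 (Λ mstar t)) := by
    have : (fun n : ℕ => mhat (n + 1) t)
        = fun n : ℕ => ((↑(n + 1) : ℝ))⁻¹ * ∑ k ∈ Finset.range (n + 1), d k := by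
      funext n; rw [hid n]; push_cast; ring_nf
    rw [this]
    exact hces
  exact tendsto_nhds_unique hseq (htend t)
end

section
/- Let I be a type and Λ : (I → ℝ) → (I → ℝ) monotone with respect to the pointwise order. Let m¹ : I → ℝ satisfy Λ m¹ ≤ m¹, and let (m̂ⁿ) be the fictitious play sequence with initial function m¹. Then for every n ≥ 1, Λ m̂ⁿ ≤ m̂ⁿ and m̂^{n+1} ≤ m̂ⁿ (pointwise). -/
/-!
Fictitious play averages the current iterate with its image under `Λ`. If `Λ m ≤ m`, the new
iterate `m'` lies on the segment between `Λ m` and `m`, so `Λ m ≤ m' ≤ m`; monotonicity then gives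
`Λ m' ≤ Λ m ≤ m'`, and the property `Λ m ≤ m` propagates along the whole sequence.
-/

section AveragingStep

variable {𝕜 E : Type*} [Semiring 𝕜] [PartialOrder 𝕜]
  [AddCommMonoid E] [PartialOrder E] [IsOrderedAddMonoid E] [Module 𝕜 E] [PosSMulMono 𝕜 E]
  {Λ : E → E} {x : E} {a b : 𝕜}

theorem combo_map_mem_Icc (hx : Λ x ≤ x) (ha : 0 ≤ a) (hb : 0 ≤ b) (hab : a + b = 1) :
    a • x + b • Λ x ∈ Set.Icc (Λ x) x :=
  segment_subset_Icc hx ⟨b, a, hb, ha, by rwa [add_comm], add_comm _ _⟩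

theorem Monotone.map_combo_le_combo (hΛ : Monotone Λ) (hx : Λ x ≤ x) (ha : 0 ≤ a) (hb : 0 ≤ b)
    (hab : a + b = 1) : Λ (a • x + b • Λ x) ≤ a • x + b • Λ x :=
  have hmem := combo_map_mem_Icc hx ha hb hab
  (hΛ hmem.2).trans hmem.1

end AveragingStep

theorem fictitious_play_nonincreasing {I : Type*}
    (Λ : (I → ℝ) → (I → ℝ)) (hΛ : Monotone Λ)
    (m1 : I → ℝ) (hm1 : Λ m1 ≤ m1)
    (mhat : ℕ → I → ℝ) (h1 : mhat 1 = m1)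
    (hrec : ∀ n : ℕ, 1 ≤ n → mhat (n + 1) =
      fun t => (n : ℝ) / (n + 1) * mhat n t + 1 / (n + 1) * Λ (mhat n) t) :
    ∀ n : ℕ, 1 ≤ n → Λ (mhat n) ≤ mhat n ∧ mhat (n + 1) ≤ mhat n := by
  have hstep (n : ℕ) (hn : 1 ≤ n) : mhat (n + 1) =
      ((n : ℝ) / (n + 1)) • mhat n + (1 / (n + 1) : ℝ) • Λ (mhat n) := hrec n hn
  have hweights (n : ℕ) : (n : ℝ) / (n + 1) + 1 / (n + 1) = 1 := by field_simp
  have hsuper (n : ℕ) (hn : 1 ≤ n) : Λ (mhat n) ≤ mhat n := by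
    induction n, hn using Nat.le_induction with
    | base => rwa [h1]
    | succ n hn ih =>
      rw [hstep n hn]
      exact hΛ.map_combo_le_combo ih (by positivity) (by positivity) (hweights n)
  intro n hn
  refine ⟨hsuper n hn, ?_⟩
  rw [hstep n hn]
  exact (combo_map_mem_Icc (hsuper n hn) (by positivity) (by positivity) (hweights n)).2
end
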